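/- arXiv:1807.11026 — 2 statements merged into one kernel-verified Lean document; each statement's English description precedes it below -/
import Mathlib

section
/- For every rational tangle word (a_1, …, a_n) and every index i with i + 2 ≤ n: (4) if a_i is an SI syllable, then a_{i+2} is an SI syllable if and only if a_{i+1} is even; (5) if a_i and a_{i+1} are NSI syllables and a_{i+1} is odd, then a_{i+2} is an SI syllable; (6) if a_i and a_{i+1} are NSI syllables and a_{i+1} is even, then a_{i+2} is an NSI syllable. -/
/-- The three connectivity states of a partially built rational tangle:
`H = {NW–NE, SW–SE}`, `V = {NW–SW, NE–SE}`, `X = {NW–SE, NE–SW}`. -/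
inductive TState : Type
  | H
  | V
  | X
  deriving DecidableEq

/-- Effect of a bottom crossing (a twist of SW and SE) on the connectivity state. -/
def bstep : TState → TState
  | .H => .H
  | .V => .X
  | .X => .V

/-- Effect of a right crossing (a twist of NE and SE) on the connectivity state. -/
def rstep : TState → TState
  | .V => .V
  | .H => .X
  | .X => .H

/-- `step true` is a bottom crossing, `step false` is a right crossing. -/
def step : Bool → TState → TState
  | true => bstep
  | false => rstep

/-- The twist direction of the (0-based) `i`-th syllable: bottom iff `i` is even
(1-based odd syllables are bottom twists). -/
def sylDir (i : ℕ) : Bool := decide (i % 2 = 0)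

/-- The state in which a crossing of the (0-based) `i`-th syllable is a self-intersection:
`H` for bottom syllables, `V` for right syllables. -/
def siState (i : ℕ) : TState := if i % 2 = 0 then TState.H else TState.V

/-- Process a list of syllables starting from state `s`; the Boolean `b` records
whether the next syllable is a bottom syllable. Each syllable `a` applies
`|a|` crossings of the appropriate direction. -/
def runWord : List ℤ → Bool → TState → TState
  | [], _, s => s
  | a :: t, b, s => runWord t (!b) ((step b)^[a.natAbs] s)

/-- The connectivity state at the start of the (0-based) `i`-th syllable of the word `w`
(a rational tangle word starts in state `V`). -/
def stateAt (w : List ℤ) (i : ℕ) : TState := runWord (w.take i) true TState.V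

/-- The (0-based) `i`-th syllable of `w` is an SI syllable. -/
def IsSISyl (w : List ℤ) (i : ℕ) : Prop := stateAt w i = siState i

instance (w : List ℤ) (i : ℕ) : Decidable (IsSISyl w i) :=
  inferInstanceAs (Decidable (_ = _))


/-!
Each crossing direction acts on the three connectivity states as an involution that fixes its
own SI state (`H` for bottom, `V` for right) and swaps the other two, so only the parities of
the syllables matter. Starting a syllable in its SI state, it stays there and the next syllable
(of the other direction) moves it off and back with period two. Starting a syllable and the next
one outside their SI states forces the state between them to be the third state `X`, which the
next direction sends to the SI state of the first one.
-/

def fixedState : Bool → TState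
  | true => .H
  | false => .V

namespace TState

lemma step_involutive (d : Bool) : Function.Involutive (step d) := by
  intro s
  cases d <;> cases s <;> rfl

lemma step_eq_self_iff {d : Bool} {s : TState} : step d s = s ↔ s = fixedState d := by
  cases d <;> cases s <;> decide

lemma step_fixedState (d : Bool) : step d (fixedState d) = fixedState d :=
  step_eq_self_iff.2 rfl

lemma fixedState_not_ne (d : Bool) : fixedState (!d) ≠ fixedState d := by
  cases d <;> decide

lemma step_not_eq_fixedState {d : Bool} {s : TState} (h : s ≠ fixedState d)
    (h' : s ≠ fixedState (!d)) : step (!d) s = fixedState d := by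
  cases d <;> cases s <;> simp_all [fixedState] <;> rfl

lemma iterate_step_fixedState (d : Bool) (n : ℕ) :
    (step d)^[n] (fixedState d) = fixedState d :=
  Function.iterate_fixed (step_fixedState d) n

lemma iterate_step_eq_self_iff {d : Bool} {s : TState} (hs : s ≠ fixedState d) (n : ℕ) :
    (step d)^[n] s = s ↔ Even n := by
  rcases Nat.even_or_odd n with hn | hn
  · simp [(step_involutive d).iterate_even hn, hn]
  · rw [(step_involutive d).iterate_odd hn, step_eq_self_iff]
    simp [hs, Nat.not_even_iff_odd.2 hn]

lemma iterate_step_ne_fixedState {d : Bool} {s : TState} (hs : s ≠ fixedState d) (n : ℕ) :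
    (step d)^[n] s ≠ fixedState d := by
  rw [← iterate_step_fixedState d n]
  exact ((step_involutive d).injective.iterate n).ne hs

end TState

lemma sylDir_succ (i : ℕ) : sylDir (i + 1) = !sylDir i := by
  simp only [sylDir]
  rcases Nat.mod_two_eq_zero_or_one i with h | h <;> simp [h, Nat.succ_mod_two_eq_zero_iff]

lemma siState_eq_fixedState (i : ℕ) : siState i = fixedState (sylDir i) := by
  by_cases h : i % 2 = 0 <;> simp [siState, sylDir, fixedState, h]

lemma runWord_append (l₁ l₂ : List ℤ) (b : Bool) (s : TState) :
    runWord (l₁ ++ l₂) b s = runWord l₂ ((! ·)^[l₁.length] b) (runWord l₁ b s) := by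
  induction l₁ generalizing b s with
  | nil => rfl
  | cons a t ih => simp [runWord, ih, Function.iterate_succ_apply]

lemma iterate_not_true (n : ℕ) : (! ·)^[n] true = sylDir n := by
  induction n with
  | zero => rfl
  | succ n ih => rw [Function.iterate_succ_apply', ih, sylDir_succ]

lemma stateAt_succ (w : List ℤ) {i : ℕ} (h : i < w.length) :
    stateAt w (i + 1) = (step (sylDir i))^[(w.getD i 0).natAbs] (stateAt w i) := by
  rw [stateAt, List.take_add_one, runWord_append, List.length_take_of_le h.le,
    List.getElem?_eq_getElem h, iterate_not_true, List.getD_eq_getElem _ _ h]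
  rfl

open TState in
/-- STATEMENT 2 (Proposition, conditions (4)–(6)), in 0-based indexing, for syllable
indices `i, i+1, i+2` of the word. -/
theorem prop_SI_last_conditions (w : List ℤ) (i : ℕ) (h : i + 2 < w.length) :
    (IsSISyl w i → (IsSISyl w (i + 2) ↔ Even (w.getD (i + 1) 0))) ∧
    (¬ IsSISyl w i → ¬ IsSISyl w (i + 1) → Odd (w.getD (i + 1) 0) →
      IsSISyl w (i + 2)) ∧
    (¬ IsSISyl w i → ¬ IsSISyl w (i + 1) → Even (w.getD (i + 1) 0) →
      ¬ IsSISyl w (i + 2)) := by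
  have h₁ := stateAt_succ w (show i < w.length by omega)
  have h₂ := stateAt_succ w (show i + 1 < w.length by omega)
  rw [sylDir_succ] at h₂
  simp only [IsSISyl, siState_eq_fixedState, sylDir_succ, Bool.not_not, h₂,
    ← Int.natAbs_even, ← Int.natAbs_odd]
  refine ⟨fun hs => ?_, fun hs hs₁ hodd => ?_, fun hs hs₁ heven => ?_⟩
  · rw [h₁, hs, iterate_step_fixedState, iterate_step_eq_self_iff (fixedState_not_ne _).symm]
  · rw [(step_involutive _).iterate_odd hodd]
    exact step_not_eq_fixedState (h₁ ▸ iterate_step_ne_fixedState hs _) hs₁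
  · rw [(step_involutive _).iterate_even heven, id, h₁]
    exact iterate_step_ne_fixedState hs _
end

section
/- Let n_1 and n_2 be odd natural numbers. In the resolution game on (n_1, n_2), the second player can force the resulting word (s_1, s_2) to lie in {(1, 1), (−1, −1)}. -/
section SignGame

variable {C : Type*} [Fintype C]

/-- A play of the sign-assignment game is a list of moves, each assigning a sign to a
crossing; it is legal if no crossing is chosen twice and every sign is `+1` or `-1`. -/
def LegalPlay (p : List (C × ℤ)) : Prop :=
  (p.map Prod.fst).Nodup ∧ ∀ m ∈ p, m.2 = 1 ∨ m.2 = -1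

/-- The play `p` follows the strategy `σ` of the player who moves at all positions whose
number of prior moves is congruent to `parity` mod 2 (`parity = 0`: first player;
`parity = 1`: second player). -/
def Follows (parity : ℕ) (σ : List (C × ℤ) → C × ℤ) (p : List (C × ℤ)) : Prop :=
  ∀ (i : ℕ) (hi : i < p.length), i % 2 = parity → p.get ⟨i, hi⟩ = σ (p.take i)

/-- The strategy `σ` always produces a legal move (an unchosen crossing with sign `±1`)
at the positions where its player is to move. -/
def LegalStrat (parity : ℕ) (σ : List (C × ℤ) → C × ℤ) : Prop :=
  ∀ p : List (C × ℤ), LegalPlay p → p.length % 2 = parity → p.length < Fintype.card C →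
    (σ p).1 ∉ p.map Prod.fst ∧ ((σ p).2 = 1 ∨ (σ p).2 = -1)

/-- The player moving at positions of parity `parity` can force the predicate `P` on
complete plays: they have a legal strategy such that every complete legal play following
it satisfies `P`. -/
def CanForce (parity : ℕ) (P : List (C × ℤ) → Prop) : Prop :=
  ∃ σ : List (C × ℤ) → C × ℤ, LegalStrat parity σ ∧
    ∀ p : List (C × ℤ), LegalPlay p → p.length = Fintype.card C → Follows parity σ p → P p

end SignGame

/-- The crossings of the resolution game on syllable sizes `n = (n_1, …, n_k)`:
pairs `(i, j)` with `i` a syllable index and `j < n_i`. -/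
abbrev Cr (n : List ℕ) : Type := Σ i : Fin n.length, Fin (n.get i)

/-- The resulting word `(s_1, …, s_k)` of a complete play of the resolution game:
`s_i` is the sum of the signs assigned to the crossings of the `i`-th syllable. -/
def result (n : List ℕ) (p : List (Cr n × ℤ)) : List ℤ :=
  (List.finRange n.length).map fun i =>
    ((p.filter fun m => decide (m.1.1 = i)).map Prod.snd).sum

/-!
The second player answers every move with a move on the paired crossing. Inside syllable `i`
the crossings `j` and `n_i - 2 - j` (for `j < n_i - 1`) are paired, and the last crossings of
the two syllables are paired with each other; as `n_1, n_2` are odd, this pairs all crossings.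
A move inside a syllable is answered with the opposite sign, a move on a last crossing with the
same sign. Then every pair inside a syllable adds `0` to both `s_1` and `s_2`, while the pair of
last crossings, carrying a common sign `ε`, adds `ε` to each: the resulting word is `(ε, ε)`.
-/

section SignGame

variable {C : Type*}

theorem LegalPlay.sublist {p q : List (C × ℤ)} (hq : LegalPlay q) (h : p.Sublist q) :
    LegalPlay p :=
  ⟨hq.1.sublist (h.map _), fun m hm => hq.2 m (h.subset hm)⟩

theorem Follows.of_append {parity : ℕ} {σ : List (C × ℤ) → C × ℤ} {p q : List (C × ℤ)}
    (h : Follows parity σ (p ++ q)) : Follows parity σ p := by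
  intro i hi hpar
  have := h i (by simp; omega) hpar
  rwa [List.get_eq_getElem, List.getElem_append_left hi,
    List.take_append_of_le_length hi.le] at this

theorem Follows.eq_of_append_singleton {parity : ℕ} {σ : List (C × ℤ) → C × ℤ}
    {p : List (C × ℤ)} {a : C × ℤ} (h : Follows parity σ (p ++ [a]))
    (hp : p.length % 2 = parity) : a = σ p := by
  simpa using h p.length (by simp) hp

theorem exists_notMem_of_length_lt_card [Fintype C] (l : List C)
    (hl : l.length < Fintype.card C) : ∃ c, c ∉ l := by
  classical
  obtain ⟨c, -, hc⟩ := Finset.exists_mem_notMem_of_card_lt_card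
    (l.toFinset_card_le.trans_lt (hl.trans_eq Finset.card_univ.symm))
  exact ⟨c, by simpa using hc⟩

theorem LegalPlay.mem_of_length_eq_card [Fintype C] {p : List (C × ℤ)} (hp : LegalPlay p)
    (hlen : p.length = Fintype.card C) (c : C) : c ∈ p.map Prod.fst := by
  classical
  have : (p.map Prod.fst).toFinset = Finset.univ := by
    apply Finset.eq_univ_of_card
    rw [List.toFinset_card_of_nodup hp.1, List.length_map, hlen]
  exact List.mem_toFinset.mp (this ▸ Finset.mem_univ c)

end SignGame

section PairingStrategy

variable {C : Type*} (M : C → C) (f : C → ℤ → ℤ)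

def pairMoves (m : C × ℤ) : List (C × ℤ) :=
  [m, (M m.1, f m.1 m.2)]

theorem apply_mem_of_mem_flatMap_pairMoves (hM : Function.Involutive M) {l : List (C × ℤ)} {c : C}
    (hc : c ∈ (l.flatMap (pairMoves M f)).map Prod.fst) :
    M c ∈ (l.flatMap (pairMoves M f)).map Prod.fst := by
  simp only [List.mem_map, List.mem_flatMap, pairMoves, List.mem_cons, List.not_mem_nil,
    or_false] at hc ⊢
  obtain ⟨_, ⟨m, hm, h | h⟩, rfl⟩ := hc <;> subst h
  · exact ⟨_, ⟨_, hm, Or.inr rfl⟩, rfl⟩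
  · exact ⟨m, ⟨m, hm, Or.inl rfl⟩, (hM m.1).symm⟩

variable [DecidableEq C] [Nonempty C]

/-- The fallback `freshMove` is never reached in a play that follows the strategy; it only makes
the strategy legal at every position. -/
noncomputable def pairingStrategy (p : List (C × ℤ)) : C × ℤ :=
  match p.getLast? with
  | some (c, s) => if M c ∈ p.map Prod.fst then freshMove p else (M c, f c s)
  | none => freshMove p
where
  freshMove (p : List (C × ℤ)) : C × ℤ := (Classical.epsilon fun c => c ∉ p.map Prod.fst, 1)

theorem pairingStrategy_append_singleton {p : List (C × ℤ)} {m : C × ℤ}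
    (h : M m.1 ∉ (p ++ [m]).map Prod.fst) :
    pairingStrategy M f (p ++ [m]) = (M m.1, f m.1 m.2) := by
  simp only [pairingStrategy, List.getLast?_append, List.getLast?_singleton, Option.some_or]
  rw [if_neg h]

theorem pairingStrategy_legalStrat [Fintype C]
    (hf : ∀ c s, s = 1 ∨ s = -1 → f c s = 1 ∨ f c s = -1) (parity : ℕ) :
    LegalStrat parity (pairingStrategy M f) := by
  intro p hp _ hlt
  have hfresh : (pairingStrategy.freshMove p).1 ∉ p.map Prod.fst ∧
      ((pairingStrategy.freshMove p).2 = 1 ∨ (pairingStrategy.freshMove p).2 = -1) :=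
    ⟨Classical.epsilon_spec (exists_notMem_of_length_lt_card _ (by simpa using hlt)),
      Or.inl rfl⟩
  unfold pairingStrategy
  split
  · rename_i c s hlast
    split_ifs with hM
    · exact hfresh
    · exact ⟨hM, hf c s (hp.2 _ (List.mem_of_getLast? hlast))⟩
  · exact hfresh

theorem exists_eq_flatMap_pairMoves (hM : Function.Involutive M) (hM_ne : ∀ c, M c ≠ c)
    {p : List (C × ℤ)} (hp : LegalPlay p) (heven : Even p.length)
    (hσ : Follows 1 (pairingStrategy M f) p) :
    ∃ l : List (C × ℤ), p = l.flatMap (pairMoves M f) := by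
  obtain ⟨k, hk⟩ := heven
  induction k generalizing p with
  | zero => exact ⟨[], List.eq_nil_of_length_eq_zero hk⟩
  | succ k ih =>
    obtain ⟨q, a, b, rfl⟩ : ∃ q a b, p = q ++ [a] ++ [b] := by
      rcases p.eq_nil_or_concat' with rfl | ⟨p', b, rfl⟩
      · simp at hk
      rcases p'.eq_nil_or_concat' with rfl | ⟨q, a, rfl⟩
      · simp at hk; omega
      exact ⟨q, a, b, rfl⟩
    have hq : q.length = k + k := by simp at hk; omega
    obtain ⟨l, rfl⟩ := ih (hp.sublist (by simp)) hσ.of_append.of_append hq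
    set r := l.flatMap (pairMoves M f)
    have ha : a.1 ∉ r.map Prod.fst := by
      have := (hp.sublist (List.sublist_append_left _ [b])).1
      simp only [List.map_append, List.nodup_append] at this
      exact fun h => this.2.2 _ h _ (by simp) rfl
    have hMa : M a.1 ∉ (r ++ [a]).map Prod.fst := by
      simp only [List.map_append, List.mem_append, List.map_cons, List.map_nil,
        List.mem_singleton, not_or]
      exact ⟨fun h => ha (hM a.1 ▸ apply_mem_of_mem_flatMap_pairMoves M f hM h), hM_ne a.1⟩
    have hb : b = (M a.1, f a.1 a.2) := by
      rw [hσ.eq_of_append_singleton (by simp [hq]; omega)]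
      exact pairingStrategy_append_singleton M f hMa
    exact ⟨l ++ [a], by simp [r, hb, pairMoves]⟩

end PairingStrategy

section Crossings

variable {n : List ℕ}

theorem Cr.ext {c d : Cr n} (h₁ : c.1 = d.1) (h₂ : (c.2 : ℕ) = d.2) : c = d := by
  obtain ⟨i, j⟩ := c
  obtain ⟨i', j'⟩ := d
  subst h₁
  simp only [Sigma.mk.injEq, heq_eq_eq, true_and]
  exact Fin.ext h₂

def IsLast (c : Cr n) : Prop := (c.2 : ℕ) + 1 = n.get c.1

instance (c : Cr n) : Decidable (IsLast c) := inferInstanceAs (Decidable (_ = _))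

def lastCrossing (i : Fin n.length) (hi : 0 < n.get i) : Cr n :=
  ⟨i, ⟨n.get i - 1, Nat.sub_one_lt_of_lt hi⟩⟩

theorem isLast_lastCrossing (i : Fin n.length) (hi : 0 < n.get i) :
    IsLast (lastCrossing i hi) := by
  simp only [IsLast, lastCrossing]
  omega

theorem lastCrossing_congr {i j : Fin n.length} (h : i = j) (hi : 0 < n.get i)
    (hj : 0 < n.get j) : lastCrossing i hi = lastCrossing j hj := by
  subst h
  rfl

theorem IsLast.eq_lastCrossing {c : Cr n} (hc : IsLast c) :
    c = lastCrossing c.1 (by have := c.2.isLt; omega) :=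
  Cr.ext rfl (by simp only [IsLast] at hc; simp only [lastCrossing]; omega)

variable (n) in
def syllableSum (i : Fin n.length) (p : List (Cr n × ℤ)) : ℤ :=
  ((p.filter fun m => decide (m.1.1 = i)).map Prod.snd).sum

theorem syllableSum_append (i : Fin n.length) (p q : List (Cr n × ℤ)) :
    syllableSum n i (p ++ q) = syllableSum n i p + syllableSum n i q := by
  simp [syllableSum]

theorem syllableSum_pair (i : Fin n.length) (c d : Cr n) (s t : ℤ) :
    syllableSum n i [(c, s), (d, t)] =
      (if c.1 = i then s else 0) + (if d.1 = i then t else 0) := by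
  by_cases hc : c.1 = i <;> by_cases hd : d.1 = i <;> simp [syllableSum, hc, hd]

theorem card_cr : Fintype.card (Cr n) = n.sum := by
  simp [Fintype.card_sigma]

end Crossings

section TwoOddSyllables

variable {n₁ n₂ : ℕ} (hn : ∀ i, Odd ([n₁, n₂].get i))

def partner (c : Cr [n₁, n₂]) : Cr [n₁, n₂] :=
  if IsLast c then lastCrossing c.1.rev (hn _).pos
  else ⟨c.1, ⟨[n₁, n₂].get c.1 - 2 - c.2, by have := c.2.isLt; omega⟩⟩

def responseSign (c : Cr [n₁, n₂]) (s : ℤ) : ℤ := if IsLast c then s else -s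

theorem responseSign_eq_one_or_neg_one (c : Cr [n₁, n₂]) (s : ℤ) (hs : s = 1 ∨ s = -1) :
    responseSign c s = 1 ∨ responseSign c s = -1 := by
  unfold responseSign
  split_ifs <;> omega

theorem partner_of_isLast {c : Cr [n₁, n₂]} (hc : IsLast c) :
    partner hn c = lastCrossing c.1.rev (hn _).pos := if_pos hc

theorem partner_of_not_isLast {c : Cr [n₁, n₂]} (hc : ¬ IsLast c) :
    partner hn c = ⟨c.1, ⟨[n₁, n₂].get c.1 - 2 - c.2, by have := c.2.isLt; omega⟩⟩ :=
  if_neg hc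

theorem isLast_partner_iff (c : Cr [n₁, n₂]) : IsLast (partner hn c) ↔ IsLast c := by
  by_cases hc : IsLast c
  · simpa [hc, partner_of_isLast hn hc] using isLast_lastCrossing _ _
  · rw [partner_of_not_isLast hn hc]
    have := c.2.isLt
    simp only [IsLast] at hc ⊢
    omega

theorem partner_involutive : Function.Involutive (partner hn) := by
  intro c
  by_cases hc : IsLast c
  · rw [partner_of_isLast hn hc, partner_of_isLast hn (isLast_lastCrossing _ _)]
    simp only [IsLast] at hc
    refine Cr.ext (Fin.rev_rev _) ?_
    show [n₁, n₂].get c.1.rev.rev - 1 = c.2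
    rw [Fin.rev_rev]
    omega
  · have hc' := (isLast_partner_iff hn c).not.mpr hc
    rw [partner_of_not_isLast hn hc', partner_of_not_isLast hn hc]
    have := c.2.isLt
    simp only [IsLast] at hc
    exact Cr.ext rfl (by simp only; omega)

theorem partner_ne (c : Cr [n₁, n₂]) : partner hn c ≠ c := by
  by_cases hc : IsLast c
  · rw [partner_of_isLast hn hc]
    intro h
    have := congrArg (fun d : Cr [n₁, n₂] => (d.1 : ℕ)) h
    have := c.1.isLt
    simp only [lastCrossing, Fin.val_rev, List.length_cons, List.length_nil] at *
    omega
  · rw [partner_of_not_isLast hn hc]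
    intro h
    have hodd := Nat.odd_iff.mp (hn c.1)
    have := congrArg (fun d : Cr [n₁, n₂] => (d.2 : ℕ)) h
    simp only [IsLast] at hc this
    omega

theorem result_two (p : List (Cr [n₁, n₂] × ℤ)) :
    result [n₁, n₂] p = [syllableSum _ 0 p, syllableSum _ 1 p] := rfl

theorem syllableSum_pairMoves (i : Fin 2) (m : Cr [n₁, n₂] × ℤ) :
    syllableSum [n₁, n₂] i (pairMoves (partner hn) responseSign m) =
      if IsLast m.1 then m.2 else 0 := by
  obtain ⟨c, s⟩ := m
  rw [pairMoves, syllableSum_pair]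
  by_cases hc : IsLast c
  · simp only [partner_of_isLast hn hc, responseSign, if_pos hc, lastCrossing]
    generalize c.1 = j
    fin_cases i <;> fin_cases j <;> simp
  · simp only [partner_of_not_isLast hn hc, responseSign, if_neg hc]
    split_ifs <;> ring

def lastSignSum (l : List (Cr [n₁, n₂] × ℤ)) : ℤ :=
  (l.map fun m => if IsLast m.1 then m.2 else 0).sum

theorem syllableSum_flatMap_pairMoves (i : Fin 2) (l : List (Cr [n₁, n₂] × ℤ)) :
    syllableSum [n₁, n₂] i (l.flatMap (pairMoves (partner hn) responseSign)) =
      lastSignSum l := by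
  induction l with
  | nil => rfl
  | cons m l ih =>
    rw [List.flatMap_cons, syllableSum_append, syllableSum_pairMoves, ih]
    simp [lastSignSum]

theorem lastCrossing_zero_eq_or_eq_partner {c : Cr [n₁, n₂]} (hc : IsLast c) :
    lastCrossing 0 (hn 0).pos = c ∨ lastCrossing 0 (hn 0).pos = partner hn c := by
  rw [partner_of_isLast hn hc]
  have : ∀ j : Fin 2, j = 0 ∨ j.rev = 0 := by decide
  rcases this c.1 with h | h
  · exact Or.inl ((lastCrossing_congr h.symm _ _).trans hc.eq_lastCrossing.symm)
  · exact Or.inr (lastCrossing_congr h.symm _ _)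

/-- The two last crossings form a single pair, so `lastSignSum l` collects the sign of at most one
move, and of one exactly when the last crossing of the first syllable has been played. -/
theorem lastSignSum_cases {l : List (Cr [n₁, n₂] × ℤ)}
    (hl : LegalPlay (l.flatMap (pairMoves (partner hn) responseSign))) :
    (lastCrossing 0 (hn 0).pos ∉ (l.flatMap (pairMoves (partner hn) responseSign)).map Prod.fst ∧
        lastSignSum l = 0) ∨
      (lastCrossing 0 (hn 0).pos ∈ (l.flatMap (pairMoves (partner hn) responseSign)).map Prod.fst ∧
        (lastSignSum l = 1 ∨ lastSignSum l = -1)) := by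
  induction l with
  | nil => exact Or.inl ⟨by simp, rfl⟩
  | cons m l ih =>
    obtain ⟨c, s⟩ := m
    have hnd := hl.1
    simp only [List.flatMap_cons, pairMoves, List.cons_append, List.nil_append, List.map_cons,
      List.nodup_cons, List.mem_cons, not_or] at hnd
    obtain ⟨⟨-, hc⟩, hpc, -⟩ := hnd
    have hs : s = 1 ∨ s = -1 := hl.2 (c, s) (by simp [pairMoves])
    have hsum : lastSignSum ((c, s) :: l) = (if IsLast c then s else 0) + lastSignSum l := rfl
    simp only [List.flatMap_cons, pairMoves, List.cons_append, List.nil_append, List.map_cons,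
      List.mem_cons, hsum]
    have ih' := ih (hl.sublist (by simp [pairMoves]))
    by_cases hlast : IsLast c
    · have hL := lastCrossing_zero_eq_or_eq_partner hn hlast
      rcases ih' with ⟨-, h0⟩ | ⟨hLrest, -⟩
      · exact Or.inr ⟨by tauto, by simpa [hlast, h0] using hs⟩
      · rcases hL with h | h <;> rw [h] at hLrest <;> contradiction
    · have hLc : lastCrossing 0 (hn 0).pos ≠ c := fun h => hlast (h ▸ isLast_lastCrossing _ _)
      have hLpc : lastCrossing 0 (hn 0).pos ≠ partner hn c := fun h =>
        hlast ((isLast_partner_iff hn c).mp (h ▸ isLast_lastCrossing _ _))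
      simpa [hlast, hLc, hLpc] using ih'

end TwoOddSyllables

/-- in the resolution game on `(n_1, n_2)` with `n_1, n_2` odd, the second
player can force the resulting word to lie in `{(1, 1), (-1, -1)}`. -/
theorem second_forces_equal_ones (n₁ n₂ : ℕ) (h₁ : Odd n₁) (h₂ : Odd n₂) :
    CanForce (C := Cr [n₁, n₂]) 1 (fun p =>
      result [n₁, n₂] p = [1, 1] ∨ result [n₁, n₂] p = [-1, -1]) := by
  have hn : ∀ i, Odd ([n₁, n₂].get i) := by
    intro i
    fin_cases i
    exacts [h₁, h₂]
  have : Nonempty (Cr [n₁, n₂]) := ⟨lastCrossing 0 (hn 0).pos⟩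
  refine ⟨pairingStrategy (partner hn) responseSign,
    pairingStrategy_legalStrat _ _ responseSign_eq_one_or_neg_one 1, fun p hp hlen hσ => ?_⟩
  have heven : Even p.length := by
    rw [hlen, card_cr]
    simpa using h₁.add_odd h₂
  obtain ⟨l, rfl⟩ :=
    exists_eq_flatMap_pairMoves _ responseSign (partner_involutive hn) (partner_ne hn) hp heven hσ
  rcases lastSignSum_cases hn hp with ⟨hL, -⟩ | ⟨-, hsum⟩
  · exact absurd (hp.mem_of_length_eq_card hlen _) hL
  show _ ∨ _
  rw [result_two, syllableSum_flatMap_pairMoves, syllableSum_flatMap_pairMoves]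
  rcases hsum with h | h <;> simp [h]
end
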